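/- Let G=(V,E,L) be a multilayer graph, Γ : L → (0,1] a function, min_sup ∈ (0,1] a real threshold, and set γ = min_{ℓ∈L} Γ(ℓ) and λ = ⌈min_sup·|L|⌉. If H ⊆ V with |H| = k is a frequent cross-graph quasi-clique (i.e., there are at least min_sup·|L| layers ℓ ∈ L such that G_ℓ[H] is a Γ(ℓ)-quasi-clique), then H satisfies the (⌈γ(k−1)⌉, λ)-FirmCore property, and hence H is contained in the (⌈γ(k−1)⌉, λ)-FirmCore of G. -/

import Mathlib

open Finset

/-- Degree of `v` in the subgraph of layer `ℓ` induced by the vertex set `S`. -/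
def degS {V L : Type*} (G : L → SimpleGraph V) [∀ ℓ, DecidableRel (G ℓ).Adj]
    (S : Finset V) (ℓ : L) (v : V) : ℕ :=
  (S.filter fun u => (G ℓ).Adj v u).card

/-- `S` satisfies the `(k,λ)`-FirmCore property: every vertex of `S` has, in at least
`λ` layers, at least `k` neighbors inside `S`. -/
def FCProp {V L : Type*} [Fintype L] (G : L → SimpleGraph V)
    [∀ ℓ, DecidableRel (G ℓ).Adj] (k lam : ℕ) (S : Finset V) : Prop :=
  ∀ v ∈ S, lam ≤ (univ.filter fun ℓ : L => k ≤ degS G S ℓ v).card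

/-- `C` is the `(k,λ)`-FirmCore: it satisfies the FirmCore property and is maximal
(under set inclusion) among such sets. -/
def IsFirmCore {V L : Type*} [Fintype L] (G : L → SimpleGraph V)
    [∀ ℓ, DecidableRel (G ℓ).Adj] (k lam : ℕ) (C : Finset V) : Prop :=
  FCProp G k lam C ∧ ∀ S : Finset V, FCProp G k lam S → C ⊆ S → S = C

/-!
In every quasi-clique layer `ℓ` each vertex of `H` has degree at least
`Γ ℓ (k - 1) ≥ γ (k - 1)`, hence at least its ceiling, and there are at least `λ` such layers.
Since degrees only grow with the vertex set, the FirmCore property is closed under unions,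
so the maximal set with the property contains every other one.
-/

section

variable {V L : Type*} {G : L → SimpleGraph V} [∀ ℓ, DecidableRel (G ℓ).Adj]

lemma degS_mono {S T : Finset V} (h : S ⊆ T) (ℓ : L) (v : V) :
    degS G S ℓ v ≤ degS G T ℓ v :=
  card_le_card (filter_subset_filter _ h)

def IsQuasiClique (G : L → SimpleGraph V) [∀ ℓ, DecidableRel (G ℓ).Adj]
    (γ : ℝ) (H : Finset V) (ℓ : L) : Prop :=
  ∀ v ∈ H, γ * ((H.card : ℝ) - 1) ≤ degS G H ℓ v

lemma IsQuasiClique.anti {γ γ' : ℝ} {H : Finset V} {ℓ : L}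
    (hH : IsQuasiClique G γ H ℓ) (hγ : γ' ≤ γ) : IsQuasiClique G γ' H ℓ := by
  intro v hv
  have hcard : (0 : ℝ) ≤ (H.card : ℝ) - 1 := by
    have : 1 ≤ H.card := card_pos.2 ⟨v, hv⟩
    rw [sub_nonneg]
    exact_mod_cast this
  exact (mul_le_mul_of_nonneg_right hγ hcard).trans (hH v hv)

lemma IsQuasiClique.ceil_le_degS {γ : ℝ} {H : Finset V} {ℓ : L}
    (hH : IsQuasiClique G γ H ℓ) {v : V} (hv : v ∈ H) :
    ⌈γ * ((H.card : ℝ) - 1)⌉₊ ≤ degS G H ℓ v :=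
  Nat.ceil_le.2 (hH v hv)

variable [Fintype L] {k lam : ℕ}

lemma FCProp.of_forall_mem_layers {S : Finset V} (A : Finset L) (hA : lam ≤ A.card)
    (h : ∀ ℓ ∈ A, ∀ v ∈ S, k ≤ degS G S ℓ v) : FCProp G k lam S := by
  intro v hv
  refine hA.trans (card_le_card fun ℓ hℓ => ?_)
  simpa only [mem_filter, mem_univ, true_and] using h ℓ hℓ v hv

lemma FCProp.le_card_layers_of_subset {S T : Finset V} (hS : FCProp G k lam S)
    (hST : S ⊆ T) :
    ∀ v ∈ S, lam ≤ (univ.filter fun ℓ : L => k ≤ degS G T ℓ v).card := fun v hv =>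
  (hS v hv).trans <| card_le_card <| monotone_filter_right _
    fun ℓ _ hℓ => hℓ.trans (degS_mono hST ℓ v)

lemma FCProp.union [DecidableEq V] {S T : Finset V} (hS : FCProp G k lam S)
    (hT : FCProp G k lam T) : FCProp G k lam (S ∪ T) := by
  intro v hv
  rcases mem_union.1 hv with hv | hv
  · exact hS.le_card_layers_of_subset subset_union_left v hv
  · exact hT.le_card_layers_of_subset subset_union_right v hv

lemma FCProp.subset_of_isFirmCore {S C : Finset V} (hS : FCProp G k lam S)
    (hC : IsFirmCore G k lam C) : S ⊆ C := by
  classical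
  rw [← hC.2 (S ∪ C) (hS.union hC.1) subset_union_right]
  exact subset_union_left

end

theorem quasi_clique_in_firmcore_general {V L : Type*} [Fintype L] [Nonempty L]
    (G : L → SimpleGraph V) [∀ ℓ, DecidableRel (G ℓ).Adj]
    (Γ : L → ℝ)
    (minSup : ℝ)
    (H : Finset V) (k : ℕ) (hk : H.card = k)
    (hfreq : minSup * (Fintype.card L : ℝ) ≤
      ((univ.filter fun ℓ : L =>
        ∀ v ∈ H, Γ ℓ * ((H.card : ℝ) - 1) ≤ (degS G H ℓ v : ℝ)).card : ℝ)) :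
    FCProp G ⌈(univ.inf' univ_nonempty Γ) * ((k : ℝ) - 1)⌉₊
        ⌈minSup * (Fintype.card L : ℝ)⌉₊ H ∧
    ∀ C : Finset V,
      IsFirmCore G ⌈(univ.inf' univ_nonempty Γ) * ((k : ℝ) - 1)⌉₊
        ⌈minSup * (Fintype.card L : ℝ)⌉₊ C → H ⊆ C := by
  subst hk
  have hcore : FCProp G ⌈(univ.inf' univ_nonempty Γ) * ((H.card : ℝ) - 1)⌉₊
      ⌈minSup * (Fintype.card L : ℝ)⌉₊ H :=
    FCProp.of_forall_mem_layers _ (Nat.ceil_le.2 hfreq) fun ℓ hℓ _ hv =>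
      (IsQuasiClique.anti (mem_filter.1 hℓ).2 (inf'_le Γ (mem_univ ℓ))).ceil_le_degS hv
  exact ⟨hcore, fun _ hC => hcore.subset_of_isFirmCore hC⟩

/-- A frequent cross-graph quasi-clique `H` of size `k` satisfies the
`(⌈γ(k-1)⌉, ⌈min_sup·|L|⌉)`-FirmCore property (where `γ = min_ℓ Γ(ℓ)`),
and hence is contained in the corresponding FirmCore. -/
theorem quasi_clique_in_firmcore {V L : Type*} [Fintype L] [Nonempty L]
    (G : L → SimpleGraph V) [∀ ℓ, DecidableRel (G ℓ).Adj]
    (Γ : L → ℝ) (hΓ : ∀ ℓ, 0 < Γ ℓ ∧ Γ ℓ ≤ 1)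
    (minSup : ℝ) (hms : 0 < minSup ∧ minSup ≤ 1)
    (H : Finset V) (k : ℕ) (hk : H.card = k)
    (hfreq : minSup * (Fintype.card L : ℝ) ≤
      ((univ.filter fun ℓ : L =>
        ∀ v ∈ H, Γ ℓ * ((H.card : ℝ) - 1) ≤ (degS G H ℓ v : ℝ)).card : ℝ)) :
    FCProp G ⌈(univ.inf' univ_nonempty Γ) * ((k : ℝ) - 1)⌉₊
        ⌈minSup * (Fintype.card L : ℝ)⌉₊ H ∧
    ∀ C : Finset V,
      IsFirmCore G ⌈(univ.inf' univ_nonempty Γ) * ((k : ℝ) - 1)⌉₊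
        ⌈minSup * (Fintype.card L : ℝ)⌉₊ C → H ⊆ C :=
  quasi_clique_in_firmcore_general G Γ minSup H k hk hfreq
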